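/- arXiv:2106.10049 — 2 statements merged into one kernel-verified Lean document; each statement's English description precedes it below -/
import Mathlib

section
/- Let G be a non-complete graph with exactly two moplexes U and W, and define the relation R_U on V(G) by x R_U y iff x and y are non-adjacent and U lies in the same component as x of G−S for every minimal x,y-separator S. Then R_U is transitive. -/
open SimpleGraph

namespace MoplexPaper

variable {V : Type*}

/-- Reachability in `G - S`: a walk from `u` to `v` all of whose vertices avoid `S`. -/
def ReachOutside (G : SimpleGraph V) (S : Set V) (u v : V) : Prop :=
  ∃ p : G.Walk u v, ∀ x ∈ p.support, x ∉ S

/-- `S` is a `u,v`-separator. -/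
def IsSeparator (G : SimpleGraph V) (u v : V) (S : Set V) : Prop :=
  ¬ G.Adj u v ∧ u ∉ S ∧ v ∉ S ∧ ¬ ReachOutside G S u v

/-- `S` is a minimal `u,v`-separator. -/
def IsMinSeparator (G : SimpleGraph V) (u v : V) (S : Set V) : Prop :=
  IsSeparator G u v S ∧ ∀ T ⊂ S, ¬ IsSeparator G u v T

/-- `S` is a minimal separator of `G`. -/
def IsMinimalSeparator (G : SimpleGraph V) (S : Set V) : Prop :=
  ∃ u v, u ≠ v ∧ IsMinSeparator G u v S

/-- The (open) neighbourhood of a set of vertices. -/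
def setNbhd (G : SimpleGraph V) (X : Set V) : Set V :=
  {v | v ∉ X ∧ ∃ x ∈ X, G.Adj v x}

/-- The closed neighbourhood of a vertex. -/
def closedNbhd (G : SimpleGraph V) (v : V) : Set V :=
  insert v (G.neighborSet v)

/-- `M` is a module of `G`. -/
def IsModule (G : SimpleGraph V) (M : Set V) : Prop :=
  ∀ v ∉ M, (∀ x ∈ M, G.Adj v x) ∨ (∀ x ∈ M, ¬ G.Adj v x)

/-- `M` is a clique module of `G`. -/
def IsCliqueModule (G : SimpleGraph V) (M : Set V) : Prop :=
  G.IsClique M ∧ IsModule G M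

/-- `X` is a moplex of `G`: an inclusion-maximal clique module whose
neighbourhood is empty or a minimal separator. -/
def IsMoplex (G : SimpleGraph V) (X : Set V) : Prop :=
  X.Nonempty ∧ IsCliqueModule G X ∧
  (∀ Y, X ⊆ Y → IsCliqueModule G Y → Y = X) ∧
  (setNbhd G X = ∅ ∨ IsMinimalSeparator G (setNbhd G X))

/-- A vertex is moplicial if it belongs to a moplex. -/
def Moplicial (G : SimpleGraph V) (v : V) : Prop := ∃ X, IsMoplex G X ∧ v ∈ X

/-- An extension of `v`: an induced `P₃` with midpoint `v`. -/
def IsExtension (G : SimpleGraph V) (v a b : V) : Prop :=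
  a ≠ b ∧ G.Adj v a ∧ G.Adj v b ∧ ¬ G.Adj a b

/-- A cycle is induced if the only edges of `G` among its vertices are its own edges. -/
def IsInducedCycle (G : SimpleGraph V) {w : V} (c : G.Walk w w) : Prop :=
  c.IsCycle ∧ ∀ x ∈ c.support, ∀ y ∈ c.support, G.Adj x y → s(x, y) ∈ c.edges

/-- `v` is avoidable: every extension of `v` is contained in an induced cycle. -/
def Avoidable (G : SimpleGraph V) (v : V) : Prop :=
  ∀ a b, IsExtension G v a b →
    ∃ (w : V) (c : G.Walk w w), IsInducedCycle G c ∧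
      a ∈ c.support ∧ v ∈ c.support ∧ b ∈ c.support

/-- `A` is an asteroidal set of `G`. -/
def IsAsteroidal (G : SimpleGraph V) (A : Set V) : Prop :=
  ∀ a ∈ A, ∀ x ∈ A, ∀ y ∈ A, x ≠ a → y ≠ a →
    ReachOutside G (closedNbhd G a) x y

/-- `G` is AT-free: it has no asteroidal triple. -/
def ATFree (G : SimpleGraph V) : Prop :=
  ¬ ∃ A : Set V, IsAsteroidal G A ∧ A.ncard = 3

/-- `G` has exactly the two moplexes `U` and `W`. -/
def HasExactlyTwoMoplexes (G : SimpleGraph V) (U W : Set V) : Prop :=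
  IsMoplex G U ∧ IsMoplex G W ∧ U ≠ W ∧ ∀ X, IsMoplex G X → X = U ∨ X = W

/-- `G` is not complete. -/
def NonComplete (G : SimpleGraph V) : Prop :=
  ∃ x y : V, x ≠ y ∧ ¬ G.Adj x y

/-- The relation "`U` prefers `x` to `y`": `x` and `y` are distinct and non-adjacent,
some minimal `x,y`-separator exists, and for every minimal `x,y`-separator `S` the
moplex `U` lies in the component of `G - S` containing `x`. -/
def RU (G : SimpleGraph V) (U : Set V) (x y : V) : Prop :=
  x ≠ y ∧ ¬ G.Adj x y ∧ (∃ S, IsMinSeparator G x y S) ∧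
    ∀ S, IsMinSeparator G x y S → ∀ u ∈ U, ReachOutside G S u x

section Lemmas

variable {G : SimpleGraph V} {S T : Set V} {a b c u v w x y z s : V}

lemma ro_refl (h : u ∉ S) : ReachOutside G S u u :=
  ⟨Walk.nil, by intro x hx; simp only [Walk.support_nil, List.mem_singleton] at hx; subst hx; exact h⟩

lemma ro_symm (h : ReachOutside G S u v) : ReachOutside G S v u := by
  obtain ⟨p, hp⟩ := h
  exact ⟨p.reverse, fun x hx => hp x (by simpa [Walk.support_reverse] using hx)⟩

lemma ro_trans (h1 : ReachOutside G S u v) (h2 : ReachOutside G S v w) :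
    ReachOutside G S u w := by
  obtain ⟨p, hp⟩ := h1; obtain ⟨q, hq⟩ := h2
  refine ⟨p.append q, fun x hx => ?_⟩
  rw [Walk.support_append] at hx
  rcases List.mem_append.mp hx with h | h
  · exact hp x h
  · exact hq x (List.mem_of_mem_tail h)

lemma ro_adj (h : G.Adj u v) (hu : u ∉ S) (hv : v ∉ S) : ReachOutside G S u v := by
  refine ⟨Walk.cons h Walk.nil, fun x hx => ?_⟩
  simp only [Walk.support_cons, Walk.support_nil, List.mem_cons, List.mem_singleton,
    List.not_mem_nil] at hx
  rcases hx with rfl | rfl | h'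
  · exact hu
  · exact hv
  · exact absurd h' (by simp)

lemma ro_mono (hTS : T ⊆ S) (h : ReachOutside G S u v) : ReachOutside G T u v := by
  obtain ⟨p, hp⟩ := h
  exact ⟨p, fun x hx hxT => hp x hx (hTS hxT)⟩

lemma ro_left (h : ReachOutside G S u v) : u ∉ S := by
  obtain ⟨p, hp⟩ := h; exact hp u p.start_mem_support

lemma ro_right (h : ReachOutside G S u v) : v ∉ S := by
  obtain ⟨p, hp⟩ := h; exact hp v p.end_mem_support

lemma ro_of_support {p : G.Walk u v} (hp : ∀ x ∈ p.support, x ∉ S) (hw : w ∈ p.support) :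
    ReachOutside G S u w ∧ ReachOutside G S w v := by
  classical
  exact ⟨⟨p.takeUntil w hw, fun x hx => hp x (p.support_takeUntil_subset hw hx)⟩,
    ⟨p.dropUntil w hw, fun x hx => hp x (p.support_dropUntil_subset hw hx)⟩⟩

lemma sep_symm (h : IsSeparator G u v S) : IsSeparator G v u S :=
  ⟨fun ha => h.1 ha.symm, h.2.2.1, h.2.1, fun hr => h.2.2.2 (ro_symm hr)⟩

lemma minsep_symm (h : IsMinSeparator G u v S) : IsMinSeparator G v u S :=
  ⟨sep_symm h.1, fun T hT hsep => h.2 T hT (sep_symm hsep)⟩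

lemma reach_of_not_sep (hadj : ¬ G.Adj a b) (ha : a ∉ T) (hb : b ∉ T)
    (h : ¬ IsSeparator G a b T) : ReachOutside G T a b := by
  by_contra hr
  exact h ⟨hadj, ha, hb, hr⟩

end Lemmas
section Lemmas2

variable {G : SimpleGraph V} {S T : Set V} {a b u v w x z : V}

lemma exists_minsep_subset_aux [Fintype V] :
    ∀ (n : ℕ) (S : Set V), S.ncard ≤ n → IsSeparator G a b S →
      ∃ T, T ⊆ S ∧ IsMinSeparator G a b T := by
  intro n
  induction n with
  | zero =>
    intro S hn h
    refine ⟨S, subset_rfl, h, fun T hT hsep => ?_⟩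
    have : S = ∅ := by
      have := Set.ncard_eq_zero (Set.toFinite S) |>.mp (Nat.le_zero.mp hn)
      exact this
    subst this
    exact absurd hT (by simp [Set.ssubset_def])
  | succ m ih =>
    intro S hn h
    by_cases hmin : ∀ T ⊂ S, ¬ IsSeparator G a b T
    · exact ⟨S, subset_rfl, h, hmin⟩
    · push_neg at hmin
      obtain ⟨T, hTS, hT⟩ := hmin
      have hTm : T.ncard ≤ m :=
        Nat.lt_succ_iff.mp (lt_of_lt_of_le (Set.ncard_lt_ncard hTS (Set.toFinite S)) hn)
      obtain ⟨T', h1, h2⟩ := ih T hTm hT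
      exact ⟨T', h1.trans hTS.subset, h2⟩

lemma exists_minsep_subset [Fintype V] (S : Set V) (h : IsSeparator G a b S) :
    ∃ T, T ⊆ S ∧ IsMinSeparator G a b T :=
  exists_minsep_subset_aux S.ncard S le_rfl h

lemma exists_minsep [Fintype V] (hne : x ≠ z) (hna : ¬ G.Adj x z) :
    ∃ S, IsMinSeparator G x z S := by
  have hsep : IsSeparator G x z {v | v ≠ x ∧ v ≠ z} := by
    refine ⟨hna, by simp, by simp, ?_⟩
    rintro ⟨p, hp⟩
    cases p with
    | nil => exact hne rfl
    | @cons _ c _ hadj q =>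
      have hc : c ∈ (Walk.cons hadj q).support := by simp [Walk.support_cons]
      have := hp c hc
      simp only [Set.mem_setOf_eq, not_and_or, not_not] at this
      rcases this with rfl | rfl
      · exact hadj.ne rfl
      · exact hna hadj
  obtain ⟨T, _, hT⟩ := exists_minsep_subset _ hsep
  exact ⟨T, hT⟩

lemma crossing (P : V → Prop) : ∀ {a b : V} (p : G.Walk a b), ¬ P a → P b →
    ∃ v w, G.Adj v w ∧ ¬ P v ∧ P w ∧ v ∈ p.support ∧ w ∈ p.support := by
  intro a b p
  induction p with
  | nil => intro ha hb; exact absurd hb ha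
  | @cons a c b h q ih =>
    intro ha hb
    by_cases hc : P c
    · exact ⟨a, c, h, ha, hc, by simp [Walk.support_cons],
        by simp [Walk.support_cons, q.start_mem_support]⟩
    · obtain ⟨v, w, h1, h2, h3, h4, h5⟩ := ih hc hb
      exact ⟨v, w, h1, h2, h3, by simp [Walk.support_cons, h4], by simp [Walk.support_cons, h5]⟩

/-- Key trimming lemma: from a walk `s → z` avoiding `S \ {s}`, extract one whose
vertices are `s` or lie on the `z`-side of `S`. -/
lemma walk_avoid_side {S : Set V} {z : V} :
    ∀ (n : ℕ) (s : V) (p : G.Walk s z), p.length ≤ n → (∀ v ∈ p.support, v ∉ S \ {s}) →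
    ∃ q : G.Walk s z, ∀ v ∈ q.support, v = s ∨ (v ∉ S ∧ ReachOutside G S v z) := by
  classical
  intro n
  induction n with
  | zero =>
    intro s p hl hp
    cases p with
    | nil =>
      refine ⟨Walk.nil, ?_⟩
      intro v hv
      simp only [Walk.support_nil, List.mem_singleton] at hv
      exact Or.inl hv
    | cons h q => simp [Walk.length_cons] at hl
  | succ m ih =>
    intro s p hl hp
    cases p with
    | nil =>
      refine ⟨Walk.nil, ?_⟩
      intro v hv
      simp only [Walk.support_nil, List.mem_singleton] at hv
      exact Or.inl hv
    | @cons _ c _ h q =>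
      have hq : ∀ v ∈ q.support, v ∉ S \ {s} := fun v hv =>
        hp v (by simp [Walk.support_cons, hv])
      have hql : q.length ≤ m := by
        simpa [Walk.length_cons, Nat.succ_le_succ_iff] using hl
      by_cases hcs : s ∈ q.support
      · exact ih s (q.dropUntil s hcs) (le_trans (q.length_dropUntil_le hcs) hql)
          (fun v hv => hq v (q.support_dropUntil_subset hcs hv))
      · refine ⟨Walk.cons h q, ?_⟩
        intro v hv
        rw [Walk.support_cons, List.mem_cons] at hv
        rcases hv with rfl | hv
        · exact Or.inl rfl
        · by_cases hvs : v = s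
          · exact Or.inl hvs
          · refine Or.inr ⟨fun hvS => hq v hv ⟨hvS, hvs⟩, ?_⟩
            refine ⟨q.dropUntil v hv, fun w hw => ?_⟩
            have hwq := q.support_dropUntil_subset hv hw
            intro hwS
            rcases em (w = s) with rfl | hws
            · exact hcs hwq
            · exact hq w hwq ⟨hwS, hws⟩

/-- Every vertex of a minimal `x,z`-separator attaches to both sides. -/
lemma minsep_attach {s : V} (h : IsMinSeparator G x z S) (hs : s ∈ S) :
    ReachOutside G (S \ {s}) x s ∧ ReachOutside G (S \ {s}) s z := by
  classical
  have hss : S \ {s} ⊂ S := Set.sdiff_singleton_ssubset.mpr hs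
  have hnot := h.2 _ hss
  have hreach : ReachOutside G (S \ {s}) x z :=
    reach_of_not_sep h.1.1 (fun hx => h.1.2.1 hx.1) (fun hz => h.1.2.2.1 hz.1) hnot
  obtain ⟨p, hp⟩ := hreach
  have hsp : s ∈ p.support := by
    by_contra hns
    refine h.1.2.2.2 ⟨p, fun v hv hvS => ?_⟩
    rcases em (v = s) with rfl | hne
    · exact hns hv
    · exact hp v hv ⟨hvS, hne⟩
  exact ro_of_support hp hsp

end Lemmas2
section Main

variable {G : SimpleGraph V}

lemma key_nonadj [Fintype V] {x y z u : V}
    (haxy : ¬ G.Adj x y) (hayz : ¬ G.Adj y z)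
    (H1 : ∀ S, IsMinSeparator G x y S → ReachOutside G S u x)
    (H2 : ∀ S, IsMinSeparator G y z S → ReachOutside G S u y)
    (hex : ∃ S, IsMinSeparator G y z S) : ¬ G.Adj x z := by
  classical
  intro haxz
  obtain ⟨S, hS⟩ := hex
  have hyS : y ∉ S := hS.1.2.1
  have hzS : z ∉ S := hS.1.2.2.1
  by_cases hxS : x ∈ S
  case neg =>
    have hxz : ReachOutside G S x z := ro_adj haxz hxS hzS
    have hsep : IsSeparator G x y S :=
      ⟨haxy, hxS, hyS, fun hr => hS.1.2.2.2 (ro_trans (ro_symm hr) hxz)⟩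
    have hmin : IsMinSeparator G x y S := by
      refine ⟨hsep, fun T hT hsepT => ?_⟩
      have h1 : ReachOutside G T y z := reach_of_not_sep hayz (fun h => hyS (hT.subset h))
        (fun h => hzS (hT.subset h)) (hS.2 T hT)
      have h2 : ReachOutside G T x z := ro_adj haxz (fun h => hxS (hT.subset h))
        (fun h => hzS (hT.subset h))
      exact hsepT.2.2.2 (ro_trans h2 (ro_symm h1))
    exact hsep.2.2.2 (ro_trans (ro_symm (H1 S hmin)) (H2 S hS))
  case pos =>
    -- x ∈ S : carve a minimal x,y-separator avoiding z, which is also a minimal y,z-separator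
    set D : Set V := (S \ {x}) ∪ {v | (v ∉ S ∧ ReachOutside G S v y) ∧ G.Adj x v} with hD
    have hxD : x ∉ D := by
      rintro (⟨-, h⟩ | ⟨-, h⟩)
      · exact h rfl
      · exact G.irrefl h
    have hyD : y ∉ D := by
      rintro (⟨h, -⟩ | ⟨-, h⟩)
      · exact hyS h
      · exact haxy h
    have hzD : z ∉ D := by
      rintro (⟨h, -⟩ | ⟨⟨-, h⟩, -⟩)
      · exact hzS h
      · exact hS.1.2.2.2 (ro_symm h)
    have hDsep : IsSeparator G x y D := by
      refine ⟨haxy, hxD, hyD, fun hr => ?_⟩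
      obtain ⟨p, hp⟩ := hr
      obtain ⟨v, w, hvw, hv, hw, hvs, hws⟩ :=
        crossing (fun v => v ∉ S ∧ ReachOutside G S v y) p (fun h => h.1 hxS) ⟨hyS, ro_refl hyS⟩
      by_cases hvS : v ∈ S
      · rcases em (v = x) with rfl | hne
        · exact (hp w hws) (Or.inr ⟨hw, hvw⟩)
        · exact (hp v hvs) (Or.inl ⟨hvS, hne⟩)
      · exact hv ⟨hvS, ro_trans (ro_adj hvw hvS hw.1) hw.2⟩
    obtain ⟨T₀, hT₀D, hT₀⟩ := exists_minsep_subset D hDsep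
    have hzT₀ : z ∉ T₀ := fun h => hzD (hT₀D h)
    have hxT₀ : x ∉ T₀ := hT₀.1.2.1
    have hyT₀ : y ∉ T₀ := hT₀.1.2.2.1
    have hsepyz : IsSeparator G y z T₀ :=
      ⟨hayz, hyT₀, hzT₀, fun hr =>
        hT₀.1.2.2.2 (ro_trans (ro_adj haxz hxT₀ hzT₀) (ro_symm hr))⟩
    have hminyz : IsMinSeparator G y z T₀ := by
      refine ⟨hsepyz, fun T hT hsepT => ?_⟩
      have hxy' : ReachOutside G T x y := reach_of_not_sep haxy (fun h => hxT₀ (hT.subset h))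
        (fun h => hyT₀ (hT.subset h)) (hT₀.2 T hT)
      exact hsepT.2.2.2 (ro_trans (ro_symm hxy')
        (ro_adj haxz (fun h => hxT₀ (hT.subset h)) (fun h => hzT₀ (hT.subset h))))
    exact hT₀.1.2.2.2 (ro_trans (ro_symm (H1 T₀ hT₀)) (H2 T₀ hminyz))

end Main
section Main2

variable {G : SimpleGraph V}

lemma key_side [Fintype V] {x y z u : V}
    (haxy : ¬ G.Adj x y) (hayz : ¬ G.Adj y z) (haxz : ¬ G.Adj x z)
    (H1 : ∀ S, IsMinSeparator G x y S → ReachOutside G S u x)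
    (H2 : ∀ S, IsMinSeparator G y z S → ReachOutside G S u y)
    (S : Set V) (hS : IsMinSeparator G x z S) : ReachOutside G S u x := by
  classical
  have hxS : x ∉ S := hS.1.2.1
  have hzS : z ∉ S := hS.1.2.2.1
  have hnr : ¬ ReachOutside G S x z := hS.1.2.2.2
  by_cases hyS : y ∈ S
  case neg =>
    by_cases hyx : ReachOutside G S y x
    · -- C2 : y on the x-side of S, so S is a minimal y,z-separator
      have hsep : IsSeparator G y z S :=
        ⟨hayz, hyS, hzS, fun hr => hnr (ro_trans (ro_symm hyx) hr)⟩
      have hmin : IsMinSeparator G y z S := by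
        refine ⟨hsep, fun T hT hsepT => ?_⟩
        have h1 : ReachOutside G T x z := reach_of_not_sep haxz (fun h => hxS (hT.subset h))
          (fun h => hzS (hT.subset h)) (hS.2 T hT)
        exact hsepT.2.2.2 (ro_trans (ro_mono hT.subset hyx) h1)
      exact ro_trans (H2 S hmin) hyx
    · by_cases hyz : ReachOutside G S y z
      · -- C1 : y on the z-side of S, so S is a minimal x,y-separator
        have hsep : IsSeparator G x y S :=
          ⟨haxy, hxS, hyS, fun hr => hnr (ro_trans hr hyz)⟩
        have hmin : IsMinSeparator G x y S := by
          refine ⟨hsep, fun T hT hsepT => ?_⟩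
          have h1 : ReachOutside G T x z := reach_of_not_sep haxz (fun h => hxS (hT.subset h))
            (fun h => hzS (hT.subset h)) (hS.2 T hT)
          exact hsepT.2.2.2 (ro_trans h1 (ro_mono hT.subset (ro_symm hyz)))
        exact H1 S hmin
      · -- C3 : y in a third component; the attachments of that component to S form a
        -- set which is simultaneously a minimal x,y- and y,z-separator: contradiction.
        set S' : Set V := {s | s ∈ S ∧ ReachOutside G (S \ {s}) s y} with hS'
        have hsubS : S' ⊆ S := fun s hs => hs.1
        have hxS' : x ∉ S' := fun h => hxS (hsubS h)
        have hyS' : y ∉ S' := fun h => hyS (hsubS h)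
        have hzS' : z ∉ S' := fun h => hzS (hsubS h)
        have hkey : ∀ a : V, a ∉ S → ¬ ReachOutside G S y a → ¬ ReachOutside G S' a y := by
          rintro a haS hray ⟨p, hp⟩
          obtain ⟨v, w, hvw, hv, hw, hvs, hws⟩ :=
            crossing (fun v => v ∉ S ∧ ReachOutside G S v y) p
              (fun h => hray (ro_symm h.2)) ⟨hyS, ro_refl hyS⟩
          by_cases hvS : v ∈ S
          · exact (hp v hvs) ⟨hvS, ro_trans
              (ro_adj hvw (fun h => h.2 rfl) (fun h => hw.1 h.1))
              (ro_mono Set.diff_subset hw.2)⟩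
          · exact hv ⟨hvS, ro_trans (ro_adj hvw hvS hw.1) hw.2⟩
        have hsepxy : IsSeparator G x y S' := ⟨haxy, hxS', hyS', hkey x hxS hyx⟩
        have hsepzy : IsSeparator G z y S' :=
          ⟨fun h => hayz h.symm, hzS', hyS', hkey z hzS hyz⟩
        have hminxy : IsMinSeparator G x y S' := by
          refine ⟨hsepxy, fun T hT hsepT => ?_⟩
          obtain ⟨s, hsS', hsT⟩ := Set.exists_of_ssubset hT
          have hTSs : T ⊆ S \ {s} :=
            fun t ht => ⟨hsubS (hT.subset ht), fun he => hsT (he ▸ ht)⟩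
          exact hsepT.2.2.2 (ro_mono hTSs (ro_trans (minsep_attach hS hsS'.1).1 hsS'.2))
        have hminyz : IsMinSeparator G y z S' := by
          refine ⟨sep_symm hsepzy, fun T hT hsepT => ?_⟩
          obtain ⟨s, hsS', hsT⟩ := Set.exists_of_ssubset hT
          have hTSs : T ⊆ S \ {s} :=
            fun t ht => ⟨hsubS (hT.subset ht), fun he => hsT (he ▸ ht)⟩
          exact hsepT.2.2.2 (ro_mono hTSs
            (ro_trans (ro_symm hsS'.2) (minsep_attach hS hsS'.1).2))
        exact absurd (ro_trans (ro_symm (H1 S' hminxy)) (H2 S' hminyz)) hsepxy.2.2.2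
  case pos =>
    -- C4 : y ∈ S
    set D : Set V := (S \ {y}) ∪ {v | (v ∉ S ∧ ReachOutside G S v x) ∧ G.Adj y v} with hD
    have hxD : x ∉ D := by
      rintro (⟨h1, -⟩ | ⟨-, h2⟩)
      · exact hxS h1
      · exact haxy h2.symm
    have hyD : y ∉ D := by
      rintro (⟨-, h1⟩ | ⟨⟨h2, -⟩, -⟩)
      · exact h1 rfl
      · exact h2 hyS
    have hzD : z ∉ D := by
      rintro (⟨h1, -⟩ | ⟨⟨-, h2⟩, -⟩)
      · exact hzS h1
      · exact hnr (ro_symm h2)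
    have hDsep : IsSeparator G x y D := by
      refine ⟨haxy, hxD, hyD, fun hr => ?_⟩
      obtain ⟨p, hp⟩ := ro_symm hr
      obtain ⟨v, w, hvw, hv, hw, hvs, hws⟩ :=
        crossing (fun v => v ∉ S ∧ ReachOutside G S v x) p
          (fun h => h.1 hyS) ⟨hxS, ro_refl hxS⟩
      by_cases hvS : v ∈ S
      · rcases em (v = y) with rfl | hne
        · exact (hp w hws) (Or.inr ⟨hw, hvw⟩)
        · exact (hp v hvs) (Or.inl ⟨hvS, hne⟩)
      · exact hv ⟨hvS, ro_trans (ro_adj hvw hvS hw.1) hw.2⟩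
    obtain ⟨T₁, hT₁D, hT₁⟩ := exists_minsep_subset D hDsep
    have hyT₁ : y ∉ T₁ := fun h => hyD (hT₁D h)
    have hxT₁ : x ∉ T₁ := hT₁.1.2.1
    have hT₁A : ∀ a, a ∉ S → ReachOutside G S a z → a ∉ T₁ := by
      intro a h1 h2 haT
      rcases hT₁D haT with ⟨h3, -⟩ | ⟨⟨-, h4⟩, -⟩
      · exact h1 h3
      · exact hnr (ro_trans (ro_symm h4) h2)
    -- any subset of T₁ is avoided by a y-z walk
    obtain ⟨p₀, hp₀⟩ := (minsep_attach hS hyS).2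
    obtain ⟨q₀, hq₀⟩ := walk_avoid_side p₀.length y p₀ le_rfl hp₀
    have hyzT : ∀ T : Set V, T ⊆ T₁ → ReachOutside G T y z := by
      intro T hTsub
      refine ⟨q₀, fun v hv hvT => ?_⟩
      rcases hq₀ v hv with rfl | ⟨h1, h2⟩
      · exact hyT₁ (hTsub hvT)
      · exact hT₁A v h1 h2 (hTsub hvT)
    have hT₁xz : ¬ ReachOutside G T₁ x z := fun hr =>
      hT₁.1.2.2.2 (ro_trans hr (ro_symm (hyzT T₁ subset_rfl)))
    -- the walk from u to x avoiding T₁ in fact avoids S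
    obtain ⟨p, hp⟩ := H1 T₁ hT₁
    refine ⟨p, fun v hv hvS => ?_⟩
    have hvT₁ : v ∉ T₁ := hp v hv
    have hvx : ReachOutside G T₁ v x := (ro_of_support hp hv).2
    rcases em (v = y) with rfl | hvy
    · exact hT₁.1.2.2.2 (ro_symm hvx)
    · obtain ⟨p₁, hp₁⟩ := (minsep_attach hS hvS).2
      obtain ⟨q₁, hq₁⟩ := walk_avoid_side p₁.length v p₁ le_rfl hp₁
      have hvz : ReachOutside G T₁ v z := by
        refine ⟨q₁, fun w hw hwT => ?_⟩
        rcases hq₁ w hw with rfl | ⟨h1, h2⟩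
        · exact hvT₁ hwT
        · exact hT₁A w h1 h2 hwT
      exact hT₁xz (ro_trans (ro_symm hvx) hvz)

end Main2
/-- In a non-complete graph with exactly two moplexes `U` and `W`, the relation `R_U`
is transitive. -/
theorem RU_transitive {V : Type*} [Fintype V] (G : SimpleGraph V) (U W : Set V)
    (hnc : NonComplete G) (h : HasExactlyTwoMoplexes G U W) :
    ∀ x y z, RU G U x y → RU G U y z → RU G U x z := by
  classical
  obtain ⟨u0, hu0⟩ := h.1.1
  intro x y z hxy hyz
  obtain ⟨hxyne, hxyna, hxyex, H1⟩ := hxy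
  obtain ⟨hyzne, hyzna, hyzex, H2⟩ := hyz
  have hxz : x ≠ z := by
    rintro rfl
    obtain ⟨S0, hS0⟩ := hxyex
    have h1 := H1 S0 hS0 u0 hu0
    have h2 := H2 S0 (minsep_symm hS0) u0 hu0
    exact hS0.1.2.2.2 (ro_trans (ro_symm h1) h2)
  have hna : ¬ G.Adj x z :=
    key_nonadj hxyna hyzna (fun S hS => H1 S hS u0 hu0) (fun S hS => H2 S hS u0 hu0) hyzex
  exact ⟨hxz, hna, exists_minsep hxz hna, fun S hS u hu =>
    key_side hxyna hyzna hna (fun T hT => H1 T hT u hu) (fun T hT => H2 T hT u hu) S hS⟩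
end MoplexPaper
end

section
/- Every graph with at most two moplexes is a cocomparability graph, i.e., the complement of a 2-moplex graph admits a transitive orientation. -/
open SimpleGraph

namespace MoplexPaper

variable {V : Type*}

/-- `G` is a cocomparability graph: the non-edges of `G` admit a transitive orientation. -/
def HasTransitiveComplementOrientation (G : SimpleGraph V) : Prop :=
  ∃ r : V → V → Prop, Transitive r ∧
    (∀ x y, r x y → x ≠ y ∧ ¬ G.Adj x y) ∧
    (∀ x y, x ≠ y → ¬ G.Adj x y → (r x y ↔ ¬ r y x))

/-!
Berry–Bordat: every full component `C` of a minimal separator `S` contains a moplex. Either `C ∪ S`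
induces a clique, and then `C` itself is a moplex; or some `c ∈ C` and `v ∈ C ∪ S` are
nonadjacent, and then in the graph obtained from `G[C ∪ S]` by completing `S` to a clique a minimal
`c,v`-separator has a full component strictly inside `C`. By induction that component contains a
moplex of the completed graph, which is also a moplex of `G`, because the other full component of
`S` in `G` lets every edge inside `S` be replaced by a path.

If every moplex contains `u₀` or `w₀`, applying this to both full components of any minimal
separator `P` shows that `P` separates `u₀` from `w₀`. Orient a non-edge `xy` from `x` to `y` when
some minimal separator puts `x` on the side of `u₀` and `y` on the side of `w₀`: a minimal
`x,y`-separator orients every non-edge one way or the other. For transitivity, if `P` orients `xy`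
and `P'` orients `yz`, the neighbourhood of the component of `y` in `G - (P ∪ P')` separates `y`
from `w₀` and misses both the `u₀`-side of `P` and the `w₀`-side of `P'`; a minimal separator inside
it orients `xz`. Irreflexivity and transitivity give asymmetry.
-/

section Reach

variable {G : SimpleGraph V} {S T : Set V} {x y z : V}

def AdjAvoiding (G : SimpleGraph V) (S : Set V) (a b : V) : Prop :=
  G.Adj a b ∧ a ∉ S ∧ b ∉ S

/-- Reachability in `G - S` as a reflexive-transitive closure, which is easier to induct on than
the walks of `ReachOutside` (see `reachOutside_iff`). -/
def ReachAvoiding (G : SimpleGraph V) (S : Set V) (x y : V) : Prop :=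
  x ∉ S ∧ y ∉ S ∧ Relation.ReflTransGen (AdjAvoiding G S) x y

/-- The component of `x` in `G - S`; it is empty when `x ∈ S`. -/
def comp (G : SimpleGraph V) (S : Set V) (x : V) : Set V :=
  {v | ReachAvoiding G S x v}

lemma mem_comp : y ∈ comp G S x ↔ ReachAvoiding G S x y := Iff.rfl

namespace ReachAvoiding

lemma refl (hx : x ∉ S) : ReachAvoiding G S x x :=
  ⟨hx, hx, .refl⟩

lemma of_adj (h : G.Adj x y) (hx : x ∉ S) (hy : y ∉ S) : ReachAvoiding G S x y :=
  ⟨hx, hy, .single ⟨h, hx, hy⟩⟩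

lemma symm (h : ReachAvoiding G S x y) : ReachAvoiding G S y x := by
  obtain ⟨hx, hy, hchain⟩ := h
  refine ⟨hy, hx, ?_⟩
  clear hx hy
  induction hchain with
  | refl => exact .refl
  | tail _ hab ih => exact ih.head ⟨hab.1.symm, hab.2.2, hab.2.1⟩

lemma trans (h : ReachAvoiding G S x y) (h' : ReachAvoiding G S y z) : ReachAvoiding G S x z :=
  ⟨h.1, h'.2.1, h.2.2.trans h'.2.2⟩

lemma anti (hTS : T ⊆ S) (h : ReachAvoiding G S x y) : ReachAvoiding G T x y :=
  ⟨fun hx => h.1 (hTS hx), fun hy => h.2.1 (hTS hy),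
    Relation.ReflTransGen.mono (fun _ _ hab => ⟨hab.1, fun ha => hab.2.1 (hTS ha),
      fun hb => hab.2.2 (hTS hb)⟩) _ _ h.2.2⟩

lemma of_forall_adjAvoiding {H : SimpleGraph V}
    (hstep : ∀ a b, AdjAvoiding H T a b → ReachAvoiding G T a b) (h : ReachAvoiding H T x y) :
    ReachAvoiding G T x y := by
  obtain ⟨hx, -, hchain⟩ := h
  induction hchain with
  | refl => exact .refl hx
  | tail _ hab ih => exact ih.trans (hstep _ _ hab)

lemma mem_of_closed {K : Set V} (h : ReachAvoiding G S x y)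
    (hcl : ∀ k ∈ K, ∀ v, G.Adj k v → v ∉ S → v ∈ K) (hx : x ∈ K) : y ∈ K := by
  obtain ⟨-, -, hchain⟩ := h
  induction hchain with
  | refl => exact hx
  | tail _ hab ih => exact hcl _ ih _ hab.1 hab.2.2

lemma of_comp_disjoint (h : ReachAvoiding G S x y) (hT : Disjoint (comp G S y) T) :
    ReachAvoiding G T x y := by
  obtain ⟨-, hy, hchain⟩ := h
  have hyT : y ∉ T := Set.disjoint_left.1 hT (refl hy)
  induction hchain using Relation.ReflTransGen.head_induction_on with
  | refl => exact refl hyT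
  | @head a b hab hchain ih =>
    have hby : ReachAvoiding G S b y := ⟨hab.2.2, hy, hchain⟩
    have haT : a ∉ T := Set.disjoint_left.1 hT ((of_adj hab.1 hab.2.1 hab.2.2).trans hby).symm
    exact (of_adj hab.1 haT ih.1).trans ih

end ReachAvoiding

lemma reachOutside_iff : ReachOutside G S x y ↔ ReachAvoiding G S x y := by
  constructor
  · rintro ⟨p, hp⟩
    induction p with
    | nil => exact .refl (hp _ (by simp))
    | @cons a b c hadj q ih =>
      have hq : ∀ v ∈ q.support, v ∉ S := fun v hv => hp v (by simp [hv])
      exact (ReachAvoiding.of_adj hadj (hp a (by simp)) (hq b q.start_mem_support)).trans (ih hq)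
  · rintro ⟨-, hy, hchain⟩
    induction hchain using Relation.ReflTransGen.head_induction_on with
    | refl => exact ⟨.nil, by simpa using hy⟩
    | head hab _ ih =>
      obtain ⟨p, hp⟩ := ih
      refine ⟨.cons hab.1 p, fun v hv => ?_⟩
      rcases List.mem_cons.1 (SimpleGraph.Walk.support_cons hab.1 p ▸ hv) with rfl | hv
      exacts [hab.2.1, hp v hv]

end Reach

section Separators

variable {G : SimpleGraph V} {S T : Set V} {x y c s u v p : V}

lemma IsSeparator.not_reachAvoiding (h : IsSeparator G x y S) : ¬ ReachAvoiding G S x y :=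
  fun h' => h.2.2.2 (reachOutside_iff.2 h')

lemma isSeparator_iff :
    IsSeparator G x y S ↔ ¬ G.Adj x y ∧ x ∉ S ∧ y ∉ S ∧ ¬ ReachAvoiding G S x y := by
  rw [IsSeparator, reachOutside_iff]

lemma IsSeparator.symm (h : IsSeparator G x y S) : IsSeparator G y x S :=
  ⟨fun hadj => h.1 hadj.symm, h.2.2.1, h.2.1,
    fun h' => h.not_reachAvoiding (reachOutside_iff.1 h').symm⟩

lemma IsSeparator.ne (h : IsSeparator G x y S) : x ≠ y := by
  rintro rfl
  exact h.not_reachAvoiding (.refl h.2.1)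

lemma IsMinSeparator.symm (h : IsMinSeparator G x y S) : IsMinSeparator G y x S :=
  ⟨h.1.symm, fun T hT hTsep => h.2 T hT hTsep.symm⟩

lemma IsMinSeparator.isMinimalSeparator (h : IsMinSeparator G x y S) : IsMinimalSeparator G S :=
  ⟨x, y, h.1.ne, h⟩

lemma IsSeparator.exists_isMinSeparator_subset [Finite V] (h : IsSeparator G x y S) :
    ∃ T ⊆ S, IsMinSeparator G x y T := by
  obtain ⟨T, hTS, hT⟩ := exists_minimal_le_of_wellFoundedLT (IsSeparator G x y) S h
  exact ⟨T, hTS, hT.prop, fun R hR hRsep => hT.not_lt hRsep hR⟩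

lemma exists_isMinSeparator [Finite V] (hxy : x ≠ y) (hadj : ¬ G.Adj x y) :
    ∃ S, IsMinSeparator G x y S := by
  have hsep : IsSeparator G x y {v | v ≠ x ∧ v ≠ y} := by
    refine isSeparator_iff.2 ⟨hadj, by simp, by simp, fun h => ?_⟩
    rcases h.2.2.cases_head with rfl | ⟨c, hxc, -⟩
    · exact hxy rfl
    · obtain rfl | rfl : c = x ∨ c = y := by simpa [or_iff_not_imp_left] using hxc.2.2
      exacts [G.irrefl hxc.1, hadj hxc.1]
  obtain ⟨S, -, hS⟩ := hsep.exists_isMinSeparator_subset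
  exact ⟨S, hS⟩

lemma IsSeparator.notMem_union_of_mem_comp (h : IsSeparator G x y S) (hv : v ∈ comp G S y) :
    v ∉ comp G S x ∪ S := by
  rintro (hv' | hv')
  exacts [h.not_reachAvoiding (hv'.trans hv.symm), hv.2.1 hv']

lemma mem_comp_of_adj (hc : c ∈ comp G S x) (hadj : G.Adj c v) (hv : v ∉ S) :
    v ∈ comp G S x :=
  hc.trans (.of_adj hadj hc.2.1 hv)

lemma mem_union_of_adj (hc : c ∈ comp G S x) (hadj : G.Adj c v) : v ∈ comp G S x ∪ S :=
  or_iff_not_imp_right.2 (mem_comp_of_adj hc hadj)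

lemma comp_eq_of_mem (hc : c ∈ comp G S x) : comp G S c = comp G S x :=
  Set.ext fun _ => ⟨fun h => hc.trans h, fun h => hc.symm.trans h⟩

lemma isSeparator_setNbhd_comp (hy : y ∉ S) (hv : v ∉ comp G S y)
    (hv' : v ∉ setNbhd G (comp G S y)) : IsSeparator G y v (setNbhd G (comp G S y)) := by
  have hyK : y ∈ comp G S y := .refl hy
  have hcl : ∀ k ∈ comp G S y, ∀ w, G.Adj k w → w ∉ setNbhd G (comp G S y) → w ∈ comp G S y :=
    fun k hk w hkw hw => by_contra fun hwK => hw ⟨hwK, k, hk, hkw.symm⟩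
  refine isSeparator_iff.2 ⟨fun hadj => hv (hcl y hyK v hadj hv'), fun h => h.1 hyK, hv', ?_⟩
  exact fun h => hv (h.mem_of_closed hcl hyK)

lemma IsMinSeparator.exists_adj_mem_comp (h : IsMinSeparator G x y S) (hs : s ∈ S) :
    ∃ c ∈ comp G S x, G.Adj s c := by
  by_contra! hnone
  have hreach : ReachAvoiding G (S \ {s}) x y := by
    by_contra hxy
    exact h.2 _ (Set.sdiff_singleton_ssubset.2 hs)
      (isSeparator_iff.2 ⟨h.1.1, fun hx => h.1.2.1 hx.1, fun hy => h.1.2.2.1 hy.1, hxy⟩)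
  have hcl : ∀ k ∈ comp G S x, ∀ w, G.Adj k w → w ∉ S \ {s} → w ∈ comp G S x := by
    intro k hk w hkw hw
    by_cases hws : w = s
    · exact absurd (hws ▸ hkw.symm) (hnone k hk)
    · exact mem_comp_of_adj hk hkw fun hwS => hw ⟨hwS, hws⟩
  exact h.1.not_reachAvoiding (hreach.mem_of_closed hcl (.refl h.1.2.1))

lemma IsMinSeparator.setNbhd_comp_eq (h : IsMinSeparator G x y S) : setNbhd G (comp G S x) = S := by
  refine Set.Subset.antisymm (fun v ⟨hv, c, hc, hvc⟩ => ?_) fun s hs => ?_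
  · exact (mem_union_of_adj hc hvc.symm).resolve_left hv
  · obtain ⟨c, hc, hsc⟩ := h.exists_adj_mem_comp hs
    exact ⟨fun hs' => hs'.2.1 hs, c, hc, hsc⟩

lemma notMem_comp_of_mem_setNbhd_comp (hST : S ⊆ T) (hy : ¬ ReachAvoiding G S y u)
    (hp : p ∈ setNbhd G (comp G T y)) : p ∉ comp G S u := by
  obtain ⟨-, k, hk, hpk⟩ := hp
  intro hup
  have hyk : ReachAvoiding G S y k := hk.anti hST
  exact hy ((hyk.trans (.of_adj hpk.symm hyk.2.1 hup.2.1)).trans (mem_comp.1 hup).symm)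

end Separators

/-- `G[C ∪ S]` with `S` completed to a clique, where `C` is the component of `x` in `G - S`; the
vertices outside `C ∪ S` are kept as isolated vertices. -/
def saturate (G : SimpleGraph V) (S : Set V) (x : V) : SimpleGraph V where
  Adj u v := u ≠ v ∧ (G.Adj u v ∧ (u ∈ comp G S x ∨ v ∈ comp G S x) ∨ u ∈ S ∧ v ∈ S)
  symm := ⟨fun _ _ ⟨hne, h⟩ => ⟨hne.symm, h.imp (fun h => ⟨h.1.symm, h.2.symm⟩) And.symm⟩⟩
  loopless := ⟨fun _ h => h.1 rfl⟩

section Saturate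

variable {G : SimpleGraph V} {S T N X : Set V} {x y u v w : V}

lemma saturate_adj_iff (hv : v ∈ comp G S x) : (saturate G S x).Adj u v ↔ G.Adj u v := by
  refine ⟨fun ⟨_, h⟩ => ?_, fun h => ⟨h.ne, .inl ⟨h, .inr hv⟩⟩⟩
  exact h.elim And.left fun h => absurd h.2 hv.2.1

lemma saturate_adj_of_mem (hu : u ∈ S) (hv : v ∈ S) (hne : u ≠ v) : (saturate G S x).Adj u v :=
  ⟨hne, .inr ⟨hu, hv⟩⟩

lemma saturate_adj_of_mem_union (hu : u ∈ comp G S x ∪ S) (hv : v ∈ comp G S x ∪ S)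
    (h : G.Adj u v) : (saturate G S x).Adj u v := by
  rcases hu with hu | hu
  · exact ⟨h.ne, .inl ⟨h, .inl hu⟩⟩
  rcases hv with hv | hv
  exacts [⟨h.ne, .inl ⟨h, .inr hv⟩⟩, saturate_adj_of_mem hu hv h.ne]

lemma mem_union_of_saturate_adj (h : (saturate G S x).Adj u v) : u ∈ comp G S x ∪ S := by
  rcases h.2 with ⟨h, hu | hv⟩ | ⟨hu, -⟩
  exacts [.inl hu, mem_union_of_adj hv h.symm, .inr hu]

lemma eq_of_saturate_reachAvoiding (hu : u ∉ comp G S x ∪ S)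
    (h : ReachAvoiding (saturate G S x) T u v) : u = v := by
  rcases h.2.2.cases_head with h | ⟨w, huw, -⟩
  exacts [h, absurd (mem_union_of_saturate_adj huw.1) hu]

lemma reachAvoiding_saturate_of_mem_of_mem (hu : u ∈ S) (huT : u ∉ T) (hw : w ∈ S)
    (h : ReachAvoiding (saturate G S x) T w v) : ReachAvoiding (saturate G S x) T u v := by
  rcases eq_or_ne u w with rfl | hne
  exacts [h, (ReachAvoiding.of_adj (saturate_adj_of_mem hu hw hne) huT h.1).trans h]

lemma saturate_reachAvoiding (hu : u ∈ comp G S x ∪ S) (hv : v ∈ comp G S x ∪ S)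
    (h : ReachAvoiding G T u v) : ReachAvoiding (saturate G S x) T u v := by
  obtain ⟨-, hvT, hchain⟩ := h
  -- A walk can only leave `C ∪ S` from `S` and return to `S`, a clique of the saturation.
  suffices ∀ a, Relation.ReflTransGen (AdjAvoiding G T) a v →
      (a ∈ comp G S x ∪ S → ReachAvoiding (saturate G S x) T a v) ∧
      (a ∉ comp G S x ∪ S → ∃ s ∈ S, ReachAvoiding (saturate G S x) T s v) from
    (this u hchain).1 hu
  intro a ha
  induction ha using Relation.ReflTransGen.head_induction_on with
  | refl => exact ⟨fun _ => .refl hvT, fun h => absurd hv h⟩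
  | @head a b hab _ ih =>
    have hexit : ∀ {a b}, G.Adj a b → a ∈ comp G S x ∪ S → b ∉ comp G S x ∪ S → a ∈ S :=
      fun hab ha hb => ha.resolve_left fun ha => hb (mem_union_of_adj ha hab)
    by_cases hb : b ∈ comp G S x ∪ S
    · refine ⟨fun ha => ?_, fun ha => ⟨b, hexit hab.1.symm hb ha, ih.1 hb⟩⟩
      exact (ReachAvoiding.of_adj (saturate_adj_of_mem_union ha hb hab.1) hab.2.1 hab.2.2).trans
        (ih.1 hb)
    · refine ⟨fun ha => ?_, fun _ => ih.2 hb⟩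
      obtain ⟨s, hs, hsv⟩ := ih.2 hb
      exact reachAvoiding_saturate_of_mem_of_mem (hexit hab.1 ha hb) hab.2.1 hs hsv

lemma IsMinSeparator.reachAvoiding_of_saturate (hS : IsMinSeparator G x y S)
    (hT : T ⊆ comp G S x ∪ S) (h : ReachAvoiding (saturate G S x) T u v) :
    ReachAvoiding G T u v := by
  have hyT : Disjoint (comp G S y) T :=
    Set.disjoint_left.2 fun w hw hwT => hS.1.notMem_union_of_mem_comp hw (hT hwT)
  refine h.of_forall_adjAvoiding fun a b ⟨hab, haT, hbT⟩ => ?_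
  rcases hab.2 with ⟨hab, -⟩ | ⟨ha, hb⟩
  · exact .of_adj hab haT hbT
  -- an edge inside `S` is replaced by a path through the component of `y`
  obtain ⟨c, hc, hac⟩ := hS.symm.exists_adj_mem_comp ha
  obtain ⟨d, hd, hbd⟩ := hS.symm.exists_adj_mem_comp hb
  have hcy := ReachAvoiding.of_comp_disjoint (mem_comp.1 hc).symm hyT
  have hdy := ReachAvoiding.of_comp_disjoint (mem_comp.1 hd).symm hyT
  exact ((ReachAvoiding.of_adj hac haT hcy.1).trans (hcy.trans hdy.symm)).trans
    (.of_adj hbd.symm hdy.1 hbT)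

lemma isCliqueModule_saturate_iff (hX : X ⊆ comp G S x) :
    IsCliqueModule (saturate G S x) X ↔ IsCliqueModule G X := by
  have hadj : ∀ u, ∀ v ∈ X, (saturate G S x).Adj u v ↔ G.Adj u v :=
    fun _ _ hv => saturate_adj_iff (hX hv)
  refine and_congr ⟨fun h u hu v hv huv => (hadj u v hv).1 (h hu hv huv),
    fun h u hu v hv huv => (hadj u v hv).2 (h hu hv huv)⟩ (forall₂_congr fun v _ => ?_)
  exact or_congr (forall₂_congr fun u hu => hadj v u hu)
    (forall₂_congr fun u hu => not_congr (hadj v u hu))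

lemma setNbhd_saturate (hX : X ⊆ comp G S x) : setNbhd (saturate G S x) X = setNbhd G X :=
  Set.ext fun _ => and_congr_right fun _ =>
    exists_congr fun _ => and_congr_right fun hu => saturate_adj_iff (hX hu)

lemma setNbhd_subset_union (hX : X ⊆ comp G S x) : setNbhd G X ⊆ comp G S x ∪ S :=
  fun _ ⟨_, _, hc, hadj⟩ => mem_union_of_adj (hX hc) hadj.symm

lemma IsMinSeparator.mem_union_of_saturate (h : IsMinSeparator (saturate G S x) u v N)
    (hN : N.Nonempty) : u ∈ comp G S x ∪ S := by
  obtain ⟨n, hn⟩ := hN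
  obtain ⟨w, huw, hnw⟩ := h.exists_adj_mem_comp hn
  by_contra hu
  obtain rfl := eq_of_saturate_reachAvoiding hu huw
  exact hu (mem_union_of_saturate_adj hnw.symm)

lemma IsMinSeparator.isMinimalSeparator_of_saturate (hS : IsMinSeparator G x y S)
    (hN : N ⊆ comp G S x ∪ S) (hne : N.Nonempty) (h : IsMinimalSeparator (saturate G S x) N) :
    IsMinimalSeparator G N := by
  obtain ⟨u, v, huv, hN'⟩ := h
  have hu := hN'.mem_union_of_saturate hne
  have hv := hN'.symm.mem_union_of_saturate hne
  refine ⟨u, v, huv, ⟨fun hadj => hN'.1.1 (saturate_adj_of_mem_union hu hv hadj), hN'.1.2.1,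
    hN'.1.2.2.1, fun h => hN'.1.not_reachAvoiding (saturate_reachAvoiding hu hv
      (reachOutside_iff.1 h))⟩, fun T hT hTsep => hN'.2 T hT ?_⟩
  refine isSeparator_iff.2 ⟨hN'.1.1, hTsep.2.1, hTsep.2.2.1, fun h => ?_⟩
  exact hTsep.not_reachAvoiding (hS.reachAvoiding_of_saturate (hT.subset.trans hN) h)

end Saturate

section BerryBordat

variable {G : SimpleGraph V} {S T Y : Set V} {x y c v t : V}

lemma IsMinSeparator.subset_comp_of_isCliqueModule (hS : IsMinSeparator G x y S)
    (hY : IsCliqueModule G Y) (hcY : c ∈ Y) (hc : c ∈ comp G S x) : Y ⊆ comp G S x := by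
  have hYCS : ∀ w ∈ Y, w ∈ comp G S x ∪ S := fun w hw => by
    rcases eq_or_ne w c with rfl | hwc
    exacts [.inl hc, mem_union_of_adj hc (hY.1 hcY hw hwc.symm)]
  intro w hw
  refine (hYCS w hw).resolve_right fun hwS => ?_
  obtain ⟨d, hd, hwd⟩ := hS.symm.exists_adj_mem_comp hwS
  have hdCS := hS.1.notMem_union_of_mem_comp hd
  rcases hY.2 d (fun hdY => hdCS (hYCS d hdY)) with hall | hnone
  exacts [hdCS (mem_union_of_adj hc (hall c hcY).symm), hnone w hw hwd.symm]

lemma IsMinSeparator.isMoplex_comp (hS : IsMinSeparator G x y S)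
    (h : ∀ c ∈ comp G S x, ∀ v ∈ comp G S x ∪ S, c ≠ v → G.Adj c v) :
    IsMoplex G (comp G S x) := by
  have hx : x ∈ comp G S x := .refl hS.1.2.1
  have hmod : IsModule G (comp G S x) := fun v hv => by
    by_cases hvS : v ∈ S
    · exact .inl fun c hc => (h c hc v (.inr hvS) fun hcv => hc.2.1 (hcv ▸ hvS)).symm
    · exact .inr fun c hc hvc => hv (mem_comp_of_adj hc hvc.symm hvS)
  refine ⟨⟨x, hx⟩, ⟨fun c hc v hv => h c hc v (.inl hv), hmod⟩, fun Y hCY hY => ?_, .inr ?_⟩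
  · exact (hS.subset_comp_of_isCliqueModule hY (hCY hx) hx).antisymm hCY
  · rw [hS.setNbhd_comp_eq]
    exact hS.isMinimalSeparator

lemma IsMinSeparator.isMoplex_of_saturate (hS : IsMinSeparator G x y S) (hY : Y ⊆ comp G S x)
    (h : IsMoplex (saturate G S x) Y) : IsMoplex G Y := by
  obtain ⟨⟨c, hc⟩, hYcm, hmax, hN⟩ := h
  refine ⟨⟨c, hc⟩, (isCliqueModule_saturate_iff hY).1 hYcm, fun Z hYZ hZ => ?_, ?_⟩
  · have hZC := hS.subset_comp_of_isCliqueModule hZ (hYZ hc) (hY hc)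
    exact hmax Z hYZ ((isCliqueModule_saturate_iff hZC).2 hZ)
  rw [← setNbhd_saturate hY]
  rcases (setNbhd (saturate G S x) Y).eq_empty_or_nonempty with hempty | hne
  · exact .inl hempty
  refine .inr (hS.isMinimalSeparator_of_saturate ?_ hne (hN.resolve_left hne.ne_empty))
  exact setNbhd_saturate hY ▸ setNbhd_subset_union hY

lemma IsSeparator.disjoint_comp_or_disjoint_comp {H : SimpleGraph V} (hT : IsSeparator H c v T)
    (hK : H.IsClique S) : Disjoint (comp H T c) S ∨ Disjoint (comp H T v) S := by
  refine or_iff_not_imp_left.2 fun h => Set.disjoint_left.2 fun s' hvs' hs' => ?_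
  obtain ⟨s, hcs, hs⟩ := Set.not_disjoint_iff.1 h
  have hss' : ReachAvoiding H T s s' := by
    rcases eq_or_ne s s' with rfl | hne
    exacts [.refl hcs.2.1, .of_adj (hK hs hs' hne) hcs.2.1 hvs'.2.1]
  exact hT.not_reachAvoiding ((mem_comp.1 hcs).trans (hss'.trans hvs'.symm))

lemma IsMinSeparator.exists_mem_comp_of_isSeparator_saturate (hS : IsMinSeparator G x y S)
    (hT : IsSeparator (saturate G S x) c v T) (hc : c ∈ comp G S x) (hv : v ∈ comp G S x ∪ S) :
    ∃ t ∈ T, t ∈ comp G S x := by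
  by_contra! hTC
  have hCT : Disjoint (comp G S x) T := Set.disjoint_left.2 fun w hw hwT => hTC w hwT hw
  obtain ⟨w, hw, hwv⟩ : ∃ w ∈ comp G S x, ReachAvoiding G T w v := by
    rcases hv with hv | hv
    · exact ⟨v, hv, .refl hT.2.2.1⟩
    · obtain ⟨w, hw, hvw⟩ := hS.exists_adj_mem_comp hv
      exact ⟨w, hw, .of_adj hvw.symm (Set.disjoint_left.1 hCT hw) hT.2.2.1⟩
  have hcw : ReachAvoiding G T c w :=
    (mem_comp.1 hc).symm.trans hw |>.of_comp_disjoint (comp_eq_of_mem hw ▸ hCT)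
  exact hT.not_reachAvoiding (saturate_reachAvoiding (.inl hc) hv (hcw.trans hwv))

lemma comp_saturate_ssubset (hv : v ∈ comp G S x ∪ S)
    (hvS : Disjoint (comp (saturate G S x) T v) S) (ht : t ∈ T) (htC : t ∈ comp G S x) :
    comp (saturate G S x) T v ⊂ comp G S x := by
  refine ⟨fun w hw => ?_, fun hC => (hC htC).2.1 ht⟩
  have hwCS : w ∈ comp G S x ∪ S := by
    by_contra hw'
    exact hw' (eq_of_saturate_reachAvoiding hw' (mem_comp.1 hw).symm ▸ hv)
  exact hwCS.resolve_right (Set.disjoint_left.1 hvS hw)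

lemma IsMinSeparator.exists_saturate_comp_ssubset [Finite V] (hS : IsMinSeparator G x y S)
    (hc : c ∈ comp G S x) (hv : v ∈ comp G S x ∪ S) (hne : c ≠ v) (hadj : ¬ G.Adj c v) :
    ∃ r r' T, IsMinSeparator (saturate G S x) r r' T ∧
      comp (saturate G S x) T r ⊂ comp G S x := by
  obtain ⟨T, hT⟩ := exists_isMinSeparator (G := saturate G S x) hne
    fun h => hadj ((saturate_adj_iff hc).1 h.symm).symm
  obtain ⟨t, ht, htC⟩ := hS.exists_mem_comp_of_isSeparator_saturate hT.1 hc hv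
  rcases hT.1.disjoint_comp_or_disjoint_comp fun _ hu _ hw hne => saturate_adj_of_mem hu hw hne
    with h | h
  · exact ⟨c, v, T, hT, comp_saturate_ssubset (.inl hc) h ht htC⟩
  · exact ⟨v, c, T, hT.symm, comp_saturate_ssubset hv h ht htC⟩

theorem IsMinSeparator.exists_isMoplex_subset_comp [Finite V] (hS : IsMinSeparator G x y S) :
    ∃ X ⊆ comp G S x, IsMoplex G X := by
  induction hn : (comp G S x).ncard using Nat.strong_induction_on generalizing G S x y with
  | _ n ih =>
  by_cases hcl : ∀ c ∈ comp G S x, ∀ v ∈ comp G S x ∪ S, c ≠ v → G.Adj c v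
  · exact ⟨_, subset_rfl, hS.isMoplex_comp hcl⟩
  push Not at hcl
  obtain ⟨c, hc, v, hv, hne, hadj⟩ := hcl
  obtain ⟨r, r', T, hT, hsub⟩ := hS.exists_saturate_comp_ssubset hc hv hne hadj
  obtain ⟨X, hXT, hX⟩ := ih _ (hn ▸ Set.ncard_lt_ncard hsub) hT rfl
  exact ⟨X, hXT.trans hsub.subset, hS.isMoplex_of_saturate (hXT.trans hsub.subset) hX⟩

end BerryBordat

/-- The paper's `R_U` for the moplex `U ∋ u₀` asks for this of every minimal `x,y`-separator
rather than of one minimal separator; as the relation is asymmetric, the two agree. -/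
def Prefers (G : SimpleGraph V) (u₀ w₀ x y : V) : Prop :=
  ∃ P, IsMinimalSeparator G P ∧ ReachAvoiding G P x u₀ ∧ ReachAvoiding G P y w₀

section Orientation

variable [Finite V] {G : SimpleGraph V} {P : Set V} {u₀ w₀ x y z : V}

lemma IsMinSeparator.reachAvoiding_or_reachAvoiding
    (hmop : ∀ X, IsMoplex G X → u₀ ∈ X ∨ w₀ ∈ X) (hP : IsMinSeparator G x y P) :
    ReachAvoiding G P x u₀ ∧ ReachAvoiding G P y w₀ ∨
      ReachAvoiding G P y u₀ ∧ ReachAvoiding G P x w₀ := by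
  obtain ⟨X, hX, hXm⟩ := hP.exists_isMoplex_subset_comp
  obtain ⟨Y, hY, hYm⟩ := hP.symm.exists_isMoplex_subset_comp
  have hsep := hP.1.not_reachAvoiding
  rcases hmop X hXm with hu | hw <;> rcases hmop Y hYm with hu' | hw'
  · exact absurd ((hX hu).trans (hY hu').symm) hsep
  · exact .inl ⟨hX hu, hY hw'⟩
  · exact .inr ⟨hY hu', hX hw⟩
  · exact absurd ((hX hw).trans (hY hw').symm) hsep

lemma IsMinimalSeparator.not_reachAvoiding (hmop : ∀ X, IsMoplex G X → u₀ ∈ X ∨ w₀ ∈ X)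
    (hP : IsMinimalSeparator G P) : ¬ ReachAvoiding G P u₀ w₀ := by
  obtain ⟨x, y, -, hP⟩ := hP
  rcases hP.reachAvoiding_or_reachAvoiding hmop with ⟨hx, hy⟩ | ⟨hy, hx⟩
  · exact fun h => hP.1.not_reachAvoiding (hx.trans (h.trans hy.symm))
  · exact fun h => hP.1.not_reachAvoiding (hx.trans (h.symm.trans hy.symm))

lemma prefers_irrefl (hmop : ∀ X, IsMoplex G X → u₀ ∈ X ∨ w₀ ∈ X) : ¬ Prefers G u₀ w₀ x x :=
  fun ⟨_, hP, hu, hw⟩ => hP.not_reachAvoiding hmop (hu.symm.trans hw)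

lemma Prefers.not_adj (hmop : ∀ X, IsMoplex G X → u₀ ∈ X ∨ w₀ ∈ X) (h : Prefers G u₀ w₀ x y) :
    ¬ G.Adj x y := fun hadj =>
  let ⟨_, hP, hu, hw⟩ := h
  hP.not_reachAvoiding hmop (hu.symm.trans ((ReachAvoiding.of_adj hadj hu.1 hw.1).trans hw))

lemma Prefers.trans (hmop : ∀ X, IsMoplex G X → u₀ ∈ X ∨ w₀ ∈ X) (hxy : Prefers G u₀ w₀ x y)
    (hyz : Prefers G u₀ w₀ y z) : Prefers G u₀ w₀ x z := by
  obtain ⟨P, hP, hxP, hyP⟩ := hxy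
  obtain ⟨P', hP', hyP', hzP'⟩ := hyz
  have hK : ∀ p ∈ setNbhd G (comp G (P ∪ P') y), p ∉ comp G P u₀ ∧ p ∉ comp G P' w₀ :=
    fun p hp => ⟨notMem_comp_of_mem_setNbhd_comp Set.subset_union_left
      (fun h => hP.not_reachAvoiding hmop (h.symm.trans hyP)) hp,
      notMem_comp_of_mem_setNbhd_comp Set.subset_union_right
      (fun h => hP'.not_reachAvoiding hmop (hyP'.symm.trans h)) hp⟩
  have hsep : IsSeparator G y w₀ (setNbhd G (comp G (P ∪ P') y)) := by
    refine isSeparator_setNbhd_comp (fun h => h.elim hyP.1 hyP'.1) (fun h => ?_)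
      fun h => (hK w₀ h).2 (.refl hzP'.2.1)
    exact hP'.not_reachAvoiding hmop (hyP'.symm.trans ((mem_comp.1 h).anti Set.subset_union_right))
  obtain ⟨Q, hQK, hQ⟩ := hsep.exists_isMinSeparator_subset
  exact ⟨Q, hQ.isMinimalSeparator,
    hxP.of_comp_disjoint (Set.disjoint_left.2 fun _ hv hvQ => (hK _ (hQK hvQ)).1 hv),
    hzP'.of_comp_disjoint (Set.disjoint_left.2 fun _ hv hvQ => (hK _ (hQK hvQ)).2 hv)⟩

lemma prefers_or_prefers (hmop : ∀ X, IsMoplex G X → u₀ ∈ X ∨ w₀ ∈ X) (hne : x ≠ y)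
    (hadj : ¬ G.Adj x y) : Prefers G u₀ w₀ x y ∨ Prefers G u₀ w₀ y x := by
  obtain ⟨P, hP⟩ := exists_isMinSeparator hne hadj
  exact (hP.reachAvoiding_or_reachAvoiding hmop).imp (fun h => ⟨P, hP.isMinimalSeparator, h⟩)
    fun h => ⟨P, hP.isMinimalSeparator, h⟩

theorem hasTransitiveComplementOrientation_of_forall_isMoplex
    (hmop : ∀ X, IsMoplex G X → u₀ ∈ X ∨ w₀ ∈ X) : HasTransitiveComplementOrientation G := by
  refine ⟨Prefers G u₀ w₀, fun _ _ _ => Prefers.trans hmop,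
    fun x y h => ⟨fun hxy => prefers_irrefl hmop (hxy ▸ h), h.not_adj hmop⟩,
    fun x y hne hadj => ⟨fun hxy hyx => prefers_irrefl hmop (hxy.trans hmop hyx), fun h => ?_⟩⟩
  exact (prefers_or_prefers hmop hne hadj).resolve_right h

lemma exists_forall_isMoplex_mem_or_mem (hG : NonComplete G)
    (h : {X : Set V | IsMoplex G X}.ncard ≤ 2) :
    ∃ u₀ w₀, ∀ X, IsMoplex G X → u₀ ∈ X ∨ w₀ ∈ X := by
  obtain ⟨x, y, hxy, hadj⟩ := hG
  obtain ⟨S, hS⟩ := exists_isMinSeparator hxy hadj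
  obtain ⟨U, hUS, hU⟩ := hS.exists_isMoplex_subset_comp
  obtain ⟨W, hWS, hW⟩ := hS.symm.exists_isMoplex_subset_comp
  obtain ⟨u₀, hu₀⟩ := hU.1
  obtain ⟨w₀, hw₀⟩ := hW.1
  refine ⟨u₀, w₀, fun X hX => ?_⟩
  by_contra! hX'
  have hUW : U ≠ W := fun hUW =>
    hS.1.not_reachAvoiding ((hUS hu₀).trans (mem_comp.1 (hWS (hUW ▸ hu₀))).symm)
  have : 2 < {X : Set V | IsMoplex G X}.ncard := (Set.two_lt_ncard_iff (Set.toFinite _)).2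
    ⟨U, W, X, hU, hW, hX, hUW, fun h => hX'.1 (h ▸ hu₀), fun h => hX'.2 (h ▸ hw₀)⟩
  omega

end Orientation

/-- Every graph with at most two moplexes is a cocomparability graph. -/
theorem twoMoplex_cocomparability {V : Type*} [Fintype V] (G : SimpleGraph V)
    (h : {X : Set V | IsMoplex G X}.ncard ≤ 2) :
    HasTransitiveComplementOrientation G := by
  by_cases hG : NonComplete G
  · obtain ⟨u₀, w₀, hmop⟩ := exists_forall_isMoplex_mem_or_mem hG h
    exact hasTransitiveComplementOrientation_of_forall_isMoplex hmop
  · exact ⟨fun _ _ => False, fun _ _ _ h => h.elim, fun _ _ h => h.elim,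
      fun x y hne hadj => absurd ⟨x, y, hne, hadj⟩ hG⟩

end MoplexPaper
end
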